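/- Let Y = {0,1}^ℕ with the ultrametric d(x,y) = e^{-k} for x ≠ y, where k = min{i : x_i ≠ y_i}, and d(x,x) = 0. For x ∈ Y let x̄ denote the coordinatewise complement, x̄_i = 1 − x_i. For each x ∈ Y define α_x : Y → Y by α_x(x) = x̄, and for y ≠ x, letting n = min{i : x_i ≠ y_i}, by (α_x(y))_i = 1 − y_i for i ≤ n and (α_x(y))_i = y_i for i > n. Then α_x is a bijection of Y with inverse α_{x̄}, and d(α_x(a), α_x(b)) = d(a,b) for all a, b ∈ Y; that is, α_x is a bijective isometry of Y onto itself. -/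
import Mathlib


open Classical in
/-- The standard ultrametric on spaces of sequences: `d(x,y) = e^{-k}` where `k` is the
first coordinate at which `x` and `y` differ, and `d(x,x) = 0`. -/
noncomputable def seqDist {α : Type*} (x y : ℕ → α) : ℝ :=
  if h : x = y then 0 else Real.exp (-(Nat.find (Function.ne_iff.mp h) : ℝ))

/-- The coordinatewise complement of a sequence of `0`s and `1`s. -/
def compSeq (x : ℕ → Fin 2) : ℕ → Fin 2 := fun i => 1 - x i

open Classical in
/-- The map `α_x : Y → Y` on `Y = {0,1}^ℕ`: it sends `x` to its complement `x̄`, and for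
`y ≠ x`, letting `n` be the first coordinate at which `x` and `y` differ, it complements
the coordinates `y_i` for `i ≤ n` and leaves the coordinates `y_i` for `i > n` unchanged. -/
noncomputable def alphaMap (x : ℕ → Fin 2) : (ℕ → Fin 2) → (ℕ → Fin 2) := fun y =>
  if h : y = x then compSeq x
  else fun i =>
    if i ≤ Nat.find (Function.ne_iff.mp (show x ≠ y from fun e => h e.symm)) then
      1 - y i
    else y i

lemma fin2_sub_sub (a : Fin 2) : 1 - (1 - a) = a := by fin_cases a <;> rfl

lemma fin2_sub_inj {a b : Fin 2} (h : 1 - a = 1 - b) : a = b := by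
  fin_cases a <;> fin_cases b <;> simp_all

open Classical in
lemma alphaMap_apply (x y : ℕ → Fin 2) (i : ℕ) :
    alphaMap x y i = if ∀ j < i, y j = x j then 1 - y i else y i := by
  unfold alphaMap
  by_cases h : y = x
  · subst h
    simp [compSeq]
  · rw [dif_neg h]
    set n := Nat.find (Function.ne_iff.mp (show x ≠ y from fun e => h e.symm)) with hn
    have key : i ≤ n ↔ ∀ j < i, y j = x j := by
      constructor
      · intro hi j hj
        have := Nat.find_min (Function.ne_iff.mp (show x ≠ y from fun e => h e.symm))
          (lt_of_lt_of_le hj hi)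
        simpa [eq_comm] using not_ne_iff.mp this
      · intro hall
        by_contra hlt
        push_neg at hlt
        exact (Nat.find_spec (Function.ne_iff.mp (show x ≠ y from fun e => h e.symm)))
          ((hall n hlt).symm)
    by_cases hc : ∀ j < i, y j = x j
    · rw [if_pos (key.mpr hc), if_pos hc]
    · rw [if_neg (fun hi => hc (key.mp hi)), if_neg hc]

lemma alphaMap_prefix_iff (x y : ℕ → Fin 2) (i : ℕ) :
    (∀ j < i, y j = x j) ↔ (∀ j < i, alphaMap x y j = compSeq x j) := by
  constructor
  · intro h j hj
    rw [alphaMap_apply, if_pos (fun k hk => h k (hk.trans hj)), h j hj]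
    rfl
  · intro h
    intro j hj
    induction j using Nat.strong_induction_on with
    | _ j ih =>
      have hpre : ∀ k < j, y k = x k := fun k hk => ih k hk (hk.trans hj)
      have := h j hj
      rw [alphaMap_apply, if_pos hpre] at this
      exact fin2_sub_inj this

lemma findIrrel {p : ℕ → Prop} {i1 i2 : DecidablePred p} (h1 h2 : ∃ n, p n) :
    @Nat.find p i1 h1 = @Nat.find p i2 h2 := by congr!

lemma compSeq_compSeq (x : ℕ → Fin 2) : compSeq (compSeq x) = x := by
  funext i; exact fin2_sub_sub (x i)

lemma alphaMap_leftInv (x : ℕ → Fin 2) :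
    Function.LeftInverse (alphaMap (compSeq x)) (alphaMap x) := by
  intro y
  funext i
  rw [alphaMap_apply, alphaMap_apply]
  by_cases h : ∀ j < i, y j = x j
  · rw [if_pos ((alphaMap_prefix_iff x y i).mp h), if_pos h, fin2_sub_sub]
  · rw [if_neg (fun hc => h ((alphaMap_prefix_iff x y i).mpr hc)), if_neg h]

lemma alphaMap_find_pres (x a b : ℕ → Fin 2) {i : ℕ} (hpre : ∀ j < i, a j = b j) :
    (alphaMap x a i = alphaMap x b i ↔ a i = b i) := by
  rw [alphaMap_apply, alphaMap_apply]
  by_cases h : ∀ j < i, a j = x j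
  · rw [if_pos h, if_pos (fun j hj => (hpre j hj).symm.trans (h j hj))]
    exact ⟨fin2_sub_inj, fun e => by rw [e]⟩
  · rw [if_neg h, if_neg (fun hc => h fun j hj => (hpre j hj).trans (hc j hj))]

/-- Each `α_x` is a bijection of `{0,1}^ℕ` with inverse `α_{x̄}`, and is an isometry
with respect to `seqDist`. -/
theorem alphaMap_bijective_isometry (x : ℕ → Fin 2) :
    Function.Bijective (alphaMap x) ∧
    Function.LeftInverse (alphaMap (compSeq x)) (alphaMap x) ∧
    Function.RightInverse (alphaMap (compSeq x)) (alphaMap x) ∧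
    ∀ a b : ℕ → Fin 2, seqDist (alphaMap x a) (alphaMap x b) = seqDist a b := by
  have hli := alphaMap_leftInv x
  have hri : Function.RightInverse (alphaMap (compSeq x)) (alphaMap x) := by
    have := alphaMap_leftInv (compSeq x)
    rwa [compSeq_compSeq] at this
  refine ⟨⟨hli.injective, hri.surjective⟩, hli, hri, ?_⟩
  intro a b
  unfold seqDist
  by_cases hab : a = b
  · subst hab; simp
  · have hne : alphaMap x a ≠ alphaMap x b := fun e => hab (hli.injective e)
    rw [dif_neg hab, dif_neg hne]
    have hab' := Function.ne_iff.mp hab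
    set n := Nat.find hab' with hn
    have hpre : ∀ j < n, a j = b j := fun j hj =>
      not_ne_iff.mp (Nat.find_min hab' hj)
    have hfind : Nat.find (Function.ne_iff.mp hne) = n := by
      rw [Nat.find_eq_iff]
      constructor
      · exact fun e => (Nat.find_spec hab') ((alphaMap_find_pres x a b hpre).mp e)
      · intro m hm
        rw [not_ne_iff]
        exact (alphaMap_find_pres x a b (fun j hj => hpre j (hj.trans hm))).mpr (hpre m hm)
    have := congrArg (fun k : ℕ => Real.exp (-(k : ℝ))) hfind
    convert this using 4
    · exact findIrrel _ _
    · rw [hn]; exact findIrrel _ _
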